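/- Let G be a finite group of order kw (k ≥ 2, w ≥ 1) and H a subgroup of G of order w. If there exists a (G,H)-group Golomb ruler, then there exists a resolvable (kw,k)-configuration; namely, the kw translates X·g (g ∈ G) of a (G,H)-GGR X form its block set, with resolution given by the G-orbit of the parallel class {X·h : h ∈ H}. -/
import Mathlib


/-- A symmetric (v,k)-configuration on the point set `G`: `v` blocks of size `k`,
no pair of distinct points in more than one block, every point in exactly `k` blocks. -/
def IsConfig (G : Type*) [DecidableEq G] (v k : ℕ) (B : Finset (Finset G)) : Prop :=
  B.card = v ∧
  (∀ b ∈ B, b.card = k) ∧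
  (∀ b₁ ∈ B, ∀ b₂ ∈ B, ∀ x y : G,
    x ≠ y → x ∈ b₁ → y ∈ b₁ → x ∈ b₂ → y ∈ b₂ → b₁ = b₂) ∧
  (∀ x : G, (B.filter (fun b => x ∈ b)).card = k)

/-- A parallel class: a set of pairwise disjoint blocks whose union is the point set. -/
def IsParallelClass (G : Type*) [DecidableEq G] (P : Finset (Finset G)) : Prop :=
  (∀ x : G, ∃ b ∈ P, x ∈ b) ∧
  (∀ b₁ ∈ P, ∀ b₂ ∈ P, b₁ ≠ b₂ → Disjoint b₁ b₂)

/-- A resolution of the block set `B` into `r` parallel classes. -/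
def IsResolution (G : Type*) [DecidableEq G] (r : ℕ) (B : Finset (Finset G))
    (R : Finset (Finset (Finset G))) : Prop :=
  R.card = r ∧
  (∀ P ∈ R, P ⊆ B ∧ IsParallelClass G P) ∧
  (∀ b ∈ B, ∃! P, P ∈ R ∧ b ∈ P)

/-- A (G,H)-group Golomb ruler: a k-subset X of G whose quotients x·y⁻¹ over
ordered pairs of distinct elements are pairwise distinct, and which is a complete
set of representatives of the left cosets of H in G. -/
def IsGGR (G : Type*) [Group G] (H : Subgroup G) (k : ℕ) (X : Finset G) : Prop :=
  X.card = k ∧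
  (∀ a ∈ X, ∀ b ∈ X, ∀ c ∈ X, ∀ d ∈ X,
    a * b⁻¹ = c * d⁻¹ → (a = b ∧ c = d) ∨ (a = c ∧ b = d)) ∧
  (∀ g : G, ∃! x, x ∈ X ∧ x⁻¹ * g ∈ H)

section Aux
variable {G : Type*} [Group G] [DecidableEq G]

lemma tr_comp (X : Finset G) (h g : G) :
    (X.image (· * h)).image (· * g) = X.image (· * (h * g)) := by
  rw [Finset.image_image]
  exact Finset.image_congr fun x _ => mul_assoc x h g

lemma ggr_inj {H : Subgroup G} {k : ℕ} {X : Finset G} (hk : 2 ≤ k)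
    (hX : IsGGR G H k X) {g g' : G}
    (hgg : X.image (· * g) = X.image (· * g')) : g = g' := by
  have hcard : 1 < X.card := by rw [hX.1]; omega
  obtain ⟨x, hx, y, hy, hxy⟩ := Finset.one_lt_card.mp hcard
  have hxg : x * g ∈ X.image (· * g') := by rw [← hgg]; exact Finset.mem_image_of_mem _ hx
  have hyg : y * g ∈ X.image (· * g') := by rw [← hgg]; exact Finset.mem_image_of_mem _ hy
  obtain ⟨a, ha, hae⟩ := Finset.mem_image.mp hxg
  obtain ⟨b, hb, hbe⟩ := Finset.mem_image.mp hyg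
  have key : x * y⁻¹ = a * b⁻¹ := by
    have e1 : x * y⁻¹ = (x * g) * (y * g)⁻¹ := by group
    have e2 : a * b⁻¹ = (a * g') * (b * g')⁻¹ := by group
    rw [e1, e2, hae, hbe]
  rcases hX.2.1 x hx y hy a ha b hb key with ⟨h1, _⟩ | ⟨h1, _⟩
  · exact absurd h1 hxy
  · subst h1
    exact (mul_left_cancel hae).symm

end Aux

section Cfg
variable {G : Type*} [Group G] [DecidableEq G] [Fintype G]

lemma configA {k w : ℕ} (hk : 2 ≤ k)
    (hG : Fintype.card G = k * w) {H : Subgroup G} {X : Finset G} (hX : IsGGR G H k X) :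
    IsConfig G (k * w) k (Finset.univ.image (fun g : G => X.image (· * g))) := by
  have hinj : Function.Injective (fun g : G => X.image (· * g)) :=
    fun g g' h => ggr_inj hk hX h
  refine ⟨?_, ?_, ?_, ?_⟩
  · rw [Finset.card_image_of_injective _ hinj, Finset.card_univ, hG]
  · rintro b hb
    obtain ⟨g, -, rfl⟩ := Finset.mem_image.mp hb
    rw [Finset.card_image_of_injective _ (mul_left_injective g), hX.1]
  · rintro b₁ hb₁ b₂ hb₂ x y hxy hxb₁ hyb₁ hxb₂ hyb₂
    obtain ⟨g₁, -, rfl⟩ := Finset.mem_image.mp hb₁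
    obtain ⟨g₂, -, rfl⟩ := Finset.mem_image.mp hb₂
    obtain ⟨a, ha, hae⟩ := Finset.mem_image.mp hxb₁
    obtain ⟨b, hbX, hbe⟩ := Finset.mem_image.mp hyb₁
    obtain ⟨c, hc, hce⟩ := Finset.mem_image.mp hxb₂
    obtain ⟨d, hd, hde⟩ := Finset.mem_image.mp hyb₂
    have key : a * b⁻¹ = c * d⁻¹ := by
      have e1 : a * b⁻¹ = (a * g₁) * (b * g₁)⁻¹ := by group
      have e2 : c * d⁻¹ = (c * g₂) * (d * g₂)⁻¹ := by group
      rw [e1, e2, hae, hbe, hce, hde]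
    rcases hX.2.1 a ha b hbX c hc d hd key with ⟨h1, _⟩ | ⟨h1, _⟩
    · exact absurd (hae.symm.trans (h1 ▸ hbe)) hxy
    · subst h1
      rw [mul_left_cancel (hae.trans hce.symm)]
  · intro z
    have h1 : (Finset.univ.image (fun g : G => X.image (· * g))).filter (fun b => z ∈ b)
        = ((Finset.univ.filter (fun g : G => z ∈ X.image (· * g))).image
          (fun g : G => X.image (· * g))) :=
      Finset.filter_image (s := Finset.univ) (f := fun g : G => X.image (· * g))
        (p := fun b => z ∈ b)
    rw [h1, Finset.card_image_of_injective _ hinj]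
    have h2 : Finset.univ.filter (fun g : G => z ∈ X.image (· * g))
        = X.image (fun a => a⁻¹ * z) := by
      ext g
      simp only [Finset.mem_filter, Finset.mem_univ, true_and, Finset.mem_image]
      constructor
      · rintro ⟨a, ha, he⟩
        exact ⟨a, ha, by rw [← he]; group⟩
      · rintro ⟨a, ha, he⟩
        exact ⟨a, ha, by rw [← he]; group⟩
    rw [h2, Finset.card_image_of_injective _
      (fun a b h => inv_injective (mul_left_injective z h)), hX.1]

end Cfg

section Res
variable {G : Type*} [Group G] [DecidableEq G] [Fintype G]

lemma resolB {k w : ℕ} (hk : 2 ≤ k) (hw : 1 ≤ w)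
    (hG : Fintype.card G = k * w)
    (H : Subgroup G) [DecidablePred (· ∈ H)] (hH : Nat.card H = w)
    {X : Finset G} (hX : IsGGR G H k X) :
    IsResolution G k (Finset.univ.image (fun g : G => X.image (· * g)))
      (Finset.univ.image (fun g : G =>
        ((Finset.univ.filter (· ∈ H)).image (fun h : G => X.image (· * h))).image
          (fun b => b.image (· * g)))) := by
  have hinj : Function.Injective (fun g : G => X.image (· * g)) :=
    fun g g' h => ggr_inj hk hX h
  set f : G → Finset G := fun g => X.image (· * g) with hf
  set Pc : G → Finset (Finset G) :=
    fun g => (Finset.univ.filter (· ∈ H)).image (fun h => f (h * g)) with hPcdef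
  have hRe : Finset.univ.image (fun g : G =>
        ((Finset.univ.filter (· ∈ H)).image f).image (fun b => b.image (· * g)))
      = Finset.univ.image Pc := by
    refine Finset.image_congr fun g _ => ?_
    rw [Finset.image_image]
    exact Finset.image_congr fun h _ => tr_comp X h g
  rw [hRe]
  -- cardinality of each class
  have hHcard : (Finset.univ.filter (· ∈ H) : Finset G).card = w := by
    rw [Nat.card_eq_fintype_card, Fintype.card_subtype] at hH
    exact hH
  have hPc_card : ∀ g : G, (Pc g).card = w := by
    intro g
    have hi : Function.Injective (fun h : G => f (h * g)) :=
      fun h h' e => mul_right_cancel (hinj e)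
    rw [hPcdef, Finset.card_image_of_injective _ hi, hHcard]
  -- invariance of classes under left H-translation
  have hC : ∀ (h g : G), h ∈ H → Pc (h * g) = Pc g := by
    intro h g hh
    ext c
    simp only [hPcdef, Finset.mem_image, Finset.mem_filter, Finset.mem_univ, true_and]
    constructor
    · rintro ⟨h₁, hh₁, rfl⟩
      exact ⟨h₁ * h, H.mul_mem hh₁ hh, congrArg f (by group)⟩
    · rintro ⟨h₂, hh₂, rfl⟩
      exact ⟨h₂ * h⁻¹, H.mul_mem hh₂ (H.inv_mem hh), congrArg f (by group)⟩
  have hfPc : ∀ g g' : G, f g' ∈ Pc g → Pc g = Pc g' := by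
    intro g g' hm
    obtain ⟨h, hmem, he⟩ := Finset.mem_image.mp hm
    have hh : h ∈ H := (Finset.mem_filter.mp hmem).2
    rw [← hinj he, hC h g hh]
  -- each class is a parallel class
  have hpar : ∀ g : G, IsParallelClass G (Pc g) := by
    intro g
    constructor
    · intro z
      obtain ⟨x, ⟨hxX, hxH⟩, -⟩ := hX.2.2 (z * g⁻¹)
      refine ⟨f ((x⁻¹ * (z * g⁻¹)) * g),
        Finset.mem_image_of_mem _ (Finset.mem_filter.mpr ⟨Finset.mem_univ _, hxH⟩), ?_⟩
      exact Finset.mem_image.mpr ⟨x, hxX, by group⟩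
    · intro b₁ hb₁ b₂ hb₂ hne
      by_contra hnd
      obtain ⟨z, hz₁, hz₂⟩ := Finset.not_disjoint_iff.mp hnd
      obtain ⟨h₁, hm₁, rfl⟩ := Finset.mem_image.mp hb₁
      obtain ⟨h₂, hm₂, rfl⟩ := Finset.mem_image.mp hb₂
      have hh₁ := (Finset.mem_filter.mp hm₁).2
      have hh₂ := (Finset.mem_filter.mp hm₂).2
      obtain ⟨a, haX, hae⟩ := Finset.mem_image.mp hz₁
      obtain ⟨b, hbX, hbe⟩ := Finset.mem_image.mp hz₂
      obtain ⟨x, -, hu⟩ := hX.2.2 (z * g⁻¹)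
      have ea : a⁻¹ * (z * g⁻¹) = h₁ := by rw [← hae]; group
      have eb : b⁻¹ * (z * g⁻¹) = h₂ := by rw [← hbe]; group
      have e1 := hu a ⟨haX, ea ▸ hh₁⟩
      have e2 := hu b ⟨hbX, eb ▸ hh₂⟩
      have eab : a = b := e1.trans e2.symm
      have : h₁ = h₂ := mul_right_cancel (mul_left_cancel
        (show a * (h₁ * g) = a * (h₂ * g) by rw [hae, eab, hbe]))
      exact hne (by rw [this])
  -- subset
  have hsub : ∀ P ∈ Finset.univ.image Pc, P ⊆ Finset.univ.image f := by
    rintro P hP b hb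
    obtain ⟨g, -, rfl⟩ := Finset.mem_image.mp hP
    obtain ⟨h, -, rfl⟩ := Finset.mem_image.mp hb
    exact Finset.mem_image_of_mem f (Finset.mem_univ _)
  -- uniqueness
  have huniq : ∀ b ∈ Finset.univ.image f, ∃! P, P ∈ Finset.univ.image Pc ∧ b ∈ P := by
    rintro b hb
    obtain ⟨g, -, rfl⟩ := Finset.mem_image.mp hb
    refine ⟨Pc g, ⟨Finset.mem_image_of_mem Pc (Finset.mem_univ g), ?_⟩, ?_⟩
    · exact Finset.mem_image.mpr ⟨1,
        Finset.mem_filter.mpr ⟨Finset.mem_univ _, H.one_mem⟩, by rw [one_mul]⟩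
    · rintro P ⟨hP, hbP⟩
      obtain ⟨g', -, rfl⟩ := Finset.mem_image.mp hP
      exact hfPc g' g hbP
  -- disjointness of classes
  have hdisj : ∀ P₁ ∈ Finset.univ.image Pc, ∀ P₂ ∈ Finset.univ.image Pc,
      P₁ ≠ P₂ → Disjoint (id P₁) (id P₂) := by
    intro P₁ hP₁ P₂ hP₂ hne
    rw [Finset.disjoint_left]
    intro b hb₁ hb₂
    obtain ⟨P, -, hu⟩ := huniq b (hsub P₁ hP₁ hb₁)
    exact hne ((hu P₁ ⟨hP₁, hb₁⟩).trans (hu P₂ ⟨hP₂, hb₂⟩).symm)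
  have hBeq : Finset.univ.image f = (Finset.univ.image Pc).biUnion id := by
    ext b
    constructor
    · intro hb
      obtain ⟨P, ⟨hP, hbP⟩, -⟩ := huniq b hb
      exact Finset.mem_biUnion.mpr ⟨P, hP, hbP⟩
    · intro hb
      obtain ⟨P, hP, hbP⟩ := Finset.mem_biUnion.mp hb
      exact hsub P hP hbP
  have hcardB : (Finset.univ.image f).card = k * w := by
    rw [Finset.card_image_of_injective _ hinj, Finset.card_univ, hG]
  have hRcard : (Finset.univ.image Pc).card * w = k * w := by
    calc (Finset.univ.image Pc).card * w
        = ∑ _P ∈ Finset.univ.image Pc, w := by rw [Finset.sum_const, smul_eq_mul]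
      _ = ∑ P ∈ Finset.univ.image Pc, (id P).card := by
          refine Finset.sum_congr rfl fun P hP => ?_
          obtain ⟨g, -, rfl⟩ := Finset.mem_image.mp hP
          exact (hPc_card g).symm
      _ = ((Finset.univ.image Pc).biUnion id).card := (Finset.card_biUnion hdisj).symm
      _ = k * w := by rw [← hBeq, hcardB]
  refine ⟨Nat.eq_of_mul_eq_mul_right (by omega) hRcard, ?_, huniq⟩
  intro P hP
  have hP' := hP
  obtain ⟨g, -, rfl⟩ := Finset.mem_image.mp hP'
  exact ⟨hsub _ hP, hpar g⟩

end Res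

/-- If G is a finite group of order kw (k ≥ 2, w ≥ 1), H ≤ G has order w, and X is a
(G,H)-group Golomb ruler, then there is a resolvable (kw,k)-configuration: its block
set is the set of kw translates X·g (g ∈ G), and its resolution is the G-orbit of the
parallel class {X·h : h ∈ H}. -/
theorem resolvable_config_from_GGR (k w : ℕ) (hk : 2 ≤ k) (hw : 1 ≤ w)
    (G : Type*) [Group G] [Fintype G] [DecidableEq G]
    (hG : Fintype.card G = k * w)
    (H : Subgroup G) [DecidablePred (· ∈ H)] (hH : Nat.card H = w)
    (X : Finset G) (hX : IsGGR G H k X) :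
    ∃ (B : Finset (Finset G)) (R : Finset (Finset (Finset G))),
      B = Finset.univ.image (fun g : G => X.image (· * g)) ∧
      R = Finset.univ.image (fun g : G =>
            ((Finset.univ.filter (· ∈ H)).image (fun h : G => X.image (· * h))).image
              (fun b => b.image (· * g))) ∧
      IsConfig G (k * w) k B ∧ IsResolution G k B R := by
  exact ⟨_, _, rfl, rfl, configA hk hG hX, resolB hk hw hG H hH hX⟩
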